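/- arXiv:2312.07403 — 3 statements merged into one kernel-verified Lean document; each statement's English description precedes it below -/
import Mathlib

section
/- Let C be a category and F : C ⥤ Cat a functor. If s is a section of the Grothendieck construction of F which is pointwise terminal (i.e., for every object x of C the fiber component of s(x) is a terminal object of the fiber category F(x)), then s is a terminal object of the category Sect(F) of sections: for every section t there exists a unique morphism of sections t ⟶ s. -/
open CategoryTheory CategoryTheory.Limits

universe v u v₂ u₂

/-- A section of the Grothendieck construction which is pointwise terminal
(its fiber component at every object is a terminal object of the fiber category)
is a terminal object of the category of sections: every section `t` admits a
unique morphism of sections `t ⟶ s`, i.e. a unique natural transformation whose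
whiskering with the projection `forget` is the identity (expressed via `eqToHom`). -/
theorem pointwiseTerminal_section_isTerminal
    {C : Type u} [Category.{v} C] (F : C ⥤ Cat.{v₂, u₂})
    (s : C ⥤ Grothendieck F) (hs : s ⋙ Grothendieck.forget F = 𝟭 C)
    (hterm : ∀ x : C, IsTerminal ((s.obj x).fiber))
    (t : C ⥤ Grothendieck F) (ht : t ⋙ Grothendieck.forget F = 𝟭 C) :
    ∃! α : t ⟶ s,
      Functor.whiskerRight α (Grothendieck.forget F) = eqToHom (ht.trans hs.symm) := by
  have hb : ∀ x : C, (t.obj x).base = (s.obj x).base := fun x =>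
    (Functor.congr_obj ht x).trans (Functor.congr_obj hs x).symm
  refine ⟨{ app := fun x => ⟨eqToHom (hb x), (hterm x).from _⟩
            naturality := fun x y f => ?_ }, ?_, ?_⟩
  · apply Grothendieck.ext
    · exact (hterm y).hom_ext _ _
    · have h1 := Functor.congr_hom ht f
      have h2 := Functor.congr_hom hs f
      dsimp at h1 h2 ⊢
      have et : ∀ z, (t.obj z).base = z := fun z => Functor.congr_obj ht z
      have es : ∀ z, (s.obj z).base = z := fun z => Functor.congr_obj hs z
      change (t.map f).base = eqToHom (et x) ≫ f ≫ eqToHom (et y).symm at h1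
      change (s.map f).base = eqToHom (es x) ≫ f ≫ eqToHom (es y).symm at h2
      rw [h1, h2]
      simp
  · ext x
    simp [eqToHom_app]
    rfl
  · intro β hβ
    ext x
    apply Grothendieck.ext
    · exact (hterm x).hom_ext _ _
    · have := NatTrans.congr_app hβ x
      simp [eqToHom_app] at this
      exact this
end

section
/- Let C be a category and F : C ⥤ Cat a functor such that for every object x of C the fiber category F(x) has a terminal object. Then there exists a pointwise terminal section of the Grothendieck construction of F, i.e., a functor s : C ⥤ Grothendieck F with s ⋙ forget = 𝟭 C whose fiber component at every object x is a terminal object of F(x). In particular, the category Sect(F) of sections has a terminal object. -/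
open CategoryTheory CategoryTheory.Limits

universe v u v₂ u₂

/-- If every fiber category `F.obj x` has a terminal object, then there exists a
pointwise terminal section of the Grothendieck construction of `F`, i.e. a functor
`s : C ⥤ Grothendieck F` with `s ⋙ forget F = 𝟭 C` whose fiber component at every
object is terminal in its fiber; in particular this section is a terminal object of
the category of sections (every section `t` admits a unique morphism of sections to `s`). -/
theorem exists_pointwiseTerminal_section
    {C : Type u} [Category.{v} C] (F : C ⥤ Cat.{v₂, u₂})
    (hT : ∀ x : C, HasTerminal (F.obj x)) :
    ∃ (s : C ⥤ Grothendieck F) (hs : s ⋙ Grothendieck.forget F = 𝟭 C),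
      (∀ x : C, Nonempty (IsTerminal ((s.obj x).fiber))) ∧
      ∀ (t : C ⥤ Grothendieck F) (ht : t ⋙ Grothendieck.forget F = 𝟭 C),
        ∃! α : t ⟶ s,
          Functor.whiskerRight α (Grothendieck.forget F) = eqToHom (ht.trans hs.symm) := by
  have := hT
  refine ⟨{ obj := fun x => ⟨x, ⊤_ (F.obj x)⟩
            map := fun {x y} u => ⟨u, terminal.from _⟩
            map_id := ?_
            map_comp := ?_ }, rfl, fun x => ⟨terminalIsTerminal⟩, ?_⟩
  · intro x
    apply Grothendieck.ext
    · apply terminal.hom_ext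
    · rfl
  · intro x y z f g
    apply Grothendieck.ext
    · apply terminal.hom_ext
    · rfl
  · intro t ht
    have hbase : ∀ x : C, (t.obj x).base = x := fun x =>
      congrArg (fun (G : C ⥤ C) => G.obj x) ht
    refine ⟨{ app := fun x => ⟨eqToHom (hbase x), terminal.from _⟩
              naturality := ?_ }, ?_, ?_⟩
    · intro x y f
      apply Grothendieck.ext
      · apply terminal.hom_ext
      · have h : ((t.map f).base ≫ eqToHom (hbase y)) =
            eqToHom (hbase x) ≫ f := by
          have := Functor.congr_hom ht f
          simp only [Functor.comp_map, Grothendieck.forget_map, Functor.id_map] at this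
          have h2 : (t.map f).base = eqToHom (hbase x) ≫ f ≫ eqToHom (hbase y).symm := this
          rw [h2]
          simp
        simpa using h
    · ext x
      simp [hbase x]
      rfl
    · intro β hβ
      ext x
      apply Grothendieck.ext
      · apply terminal.hom_ext
      · have := congrArg (fun (α : t ⋙ Grothendieck.forget F ⟶ _) => α.app x) hβ
        simp [eqToHom_app] at this
        exact this
end

section
/- Let C be a category and F : C ⥤ Cat a functor such that for every object x of C the fiber category F(x) has a terminal object. Then the full subcategory of the category Sect(F) of sections of the Grothendieck construction of F spanned by the pointwise terminal sections is equivalent to the terminal (one-object, one-morphism) category: it is nonempty, between any two of its objects there is exactly one morphism, and that morphism is an isomorphism. -/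
open CategoryTheory CategoryTheory.Limits

universe v u v₂ u₂

section Aux

variable {C : Type u} [Category.{v} C] {F : C ⥤ Cat.{v₂, u₂}}

/-- Existence and uniqueness of section morphisms into a pointwise terminal section. -/
lemma aux_existsUnique (s t : C ⥤ Grothendieck F)
    (hs : s ⋙ Grothendieck.forget F = 𝟭 C)
    (ht : t ⋙ Grothendieck.forget F = 𝟭 C)
    (htT : ∀ x : C, Nonempty (IsTerminal ((t.obj x).fiber))) :
    ∃! α : s ⟶ t,
      Functor.whiskerRight α (Grothendieck.forget F) = eqToHom (hs.trans ht.symm) := by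
  have hbase : ∀ x : C, (s.obj x).base = (t.obj x).base := fun x =>
    (Functor.congr_obj hs x).trans (Functor.congr_obj ht x).symm
  refine ⟨⟨fun x => ⟨eqToHom (hbase x), (htT x).some.from _⟩, ?_⟩, ?_, ?_⟩
  · intro x y f
    have hb : (s.map f).base ≫ eqToHom (hbase y) = eqToHom (hbase x) ≫ (t.map f).base := by
      have sx : (s.obj x).base = x := Functor.congr_obj hs x
      have sy : (s.obj y).base = y := Functor.congr_obj hs y
      have tx : (t.obj x).base = x := Functor.congr_obj ht x
      have ty : (t.obj y).base = y := Functor.congr_obj ht y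
      have h1 : (s.map f).base = eqToHom sx ≫ f ≫ eqToHom sy.symm := Functor.congr_hom hs f
      have h2 : (t.map f).base = eqToHom tx ≫ f ≫ eqToHom ty.symm := Functor.congr_hom ht f
      rw [h1, h2]
      simp
    exact Grothendieck.ext _ _ hb ((htT y).some.hom_ext _ _)
  · apply NatTrans.ext
    funext x
    simp [eqToHom_app]
    rfl
  · intro β hβ
    apply NatTrans.ext
    funext x
    have hb : (β.app x).base = eqToHom (hbase x) := by
      have := congrArg (fun γ => NatTrans.app γ x) hβ
      simp [eqToHom_app] at this
      exact this
    exact Grothendieck.ext _ _ hb ((htT x).some.hom_ext _ _)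

end Aux

/-- If every fiber category `F.obj x` has a terminal object, then the full
subcategory of the category of sections of the Grothendieck construction of `F`
spanned by the pointwise terminal sections is equivalent to the terminal category:
it is nonempty; between any two pointwise terminal sections there is exactly one
morphism of sections (a natural transformation whose whiskering with `forget F` is
the identity, expressed via `eqToHom`); and any such morphism is an isomorphism. -/
theorem pointwiseTerminal_sections_contractible
    {C : Type u} [Category.{v} C] (F : C ⥤ Cat.{v₂, u₂})
    (hT : ∀ x : C, HasTerminal (F.obj x)) :
    (∃ (s : C ⥤ Grothendieck F) (_ : s ⋙ Grothendieck.forget F = 𝟭 C),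
        ∀ x : C, Nonempty (IsTerminal ((s.obj x).fiber))) ∧
    (∀ (s t : C ⥤ Grothendieck F)
        (hs : s ⋙ Grothendieck.forget F = 𝟭 C)
        (ht : t ⋙ Grothendieck.forget F = 𝟭 C),
        (∀ x : C, Nonempty (IsTerminal ((s.obj x).fiber))) →
        (∀ x : C, Nonempty (IsTerminal ((t.obj x).fiber))) →
        (∃! α : s ⟶ t,
            Functor.whiskerRight α (Grothendieck.forget F) = eqToHom (hs.trans ht.symm)) ∧
        (∀ α : s ⟶ t,
            Functor.whiskerRight α (Grothendieck.forget F) = eqToHom (hs.trans ht.symm) →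
            IsIso α)) := by
  haveI : ∀ x : C, HasTerminal (F.obj x) := hT
  constructor
  · -- existence of a pointwise terminal section
    refine ⟨{ obj := fun x => ⟨x, ⊤_ (F.obj x)⟩
              map := fun f => ⟨f, terminal.from _⟩
              map_id := fun x => Grothendieck.ext _ _ rfl (terminal.hom_ext _ _)
              map_comp := fun f g => Grothendieck.ext _ _ rfl (terminal.hom_ext _ _) },
          ?_, fun x => ⟨terminalIsTerminal⟩⟩
    rfl
  · intro s t hs ht hsT htT
    refine ⟨aux_existsUnique s t hs ht htT, ?_⟩
    intro α hα
    obtain ⟨β, hβ, -⟩ := aux_existsUnique t s ht hs hsT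
    have h1 : α ≫ β = 𝟙 s := by
      obtain ⟨γ, -, hu⟩ := aux_existsUnique s s hs hs hsT
      have e1 : α ≫ β = γ := hu _ (by dsimp only; rw [Functor.whiskerRight_comp, hα, hβ]; simp)
      have e2 : 𝟙 s = γ := hu _ (by dsimp only; simp)
      rw [e1, e2]
    have h2 : β ≫ α = 𝟙 t := by
      obtain ⟨γ, -, hu⟩ := aux_existsUnique t t ht ht htT
      have e1 : β ≫ α = γ := hu _ (by dsimp only; rw [Functor.whiskerRight_comp, hα, hβ]; simp)
      have e2 : 𝟙 t = γ := hu _ (by dsimp only; simp)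
      rw [e1, e2]
    exact ⟨β, h1, h2⟩
end
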